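/- Let φ : ℝ^D × P → ℝ^K be a parametrised feature map such that for every x ∈ ℝ^D there exists ρ ∈ P with φ(x, ρ) ≠ 0, let D = {(x_n, y_n)}_{n=1}^N be a nonempty finite dataset in ℝ^D × ℝ^Q, let M ≥ 2, and let λ > 1. Then for every Q₁ > 0 and Q₂ > 0 there exist weight matrices W^i ∈ ℝ^{Q×K} and parameters ρ^i ∈ P (i = 1,…,M), defining F_i(x) = W^i φ(x, ρ^i), such that simultaneously E_λ(F, D) < −Q₁, the ensemble squared loss (1/N)∑_{n=1}^N ‖F̄(x_n) − y_n‖² > Q₂, and the average individual squared loss (1/N)∑_{n=1}^N (1/M)∑_{i=1}^M ‖F_i(x_n) − y_n‖² > Q₂. -/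

import Mathlib

open Finset Matrix Filter

/-- Squared Euclidean norm of a vector in `ℝ^n`. -/
noncomputable def sqNorm {n : ℕ} (v : Fin n → ℝ) : ℝ := ∑ k, (v k) ^ 2

/-- The ensemble error `E_λ(F, 𝒟)` of a Modular Regression Network
`F = {Fᵢ}` on the dataset `𝒟 = {(xₙ, yₙ)}`. -/
noncomputable def ensError {D Q M N : ℕ} (lam : ℝ)
    (F : Fin M → (Fin D → ℝ) → (Fin Q → ℝ))
    (x : Fin N → Fin D → ℝ) (y : Fin N → Fin Q → ℝ) : ℝ :=
  (1 / (N : ℝ)) * ∑ n,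
    ((1 / (M : ℝ)) * ∑ i, sqNorm (F i (x n) - y n)
      - lam * ((1 / (M : ℝ)) * ∑ i,
          sqNorm (F i (x n) - (1 / (M : ℝ)) • ∑ j, F j (x n))))

lemma sqNorm_nonneg {n : ℕ} (v : Fin n → ℝ) : 0 ≤ sqNorm v :=
  Finset.sum_nonneg fun _ _ => sq_nonneg _

lemma sqNorm_smul_sub {n : ℕ} (c : ℝ) (v w : Fin n → ℝ) :
    sqNorm (c • v - w) = (c ^ 2) * sqNorm v - 2 * c * (∑ k, v k * w k) + sqNorm w := by
  simp only [sqNorm, Finset.mul_sum, ← Finset.sum_add_distrib, ← Finset.sum_sub_distrib]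
  exact Finset.sum_congr rfl fun k _ => by simp [Pi.sub_apply, Pi.smul_apply]; ring

lemma sqNorm_smul {n : ℕ} (c : ℝ) (v : Fin n → ℝ) :
    sqNorm (c • v) = c ^ 2 * sqNorm v := by
  simp only [sqNorm, Finset.mul_sum]
  exact Finset.sum_congr rfl fun k _ => by simp [Pi.smul_apply]; ring

lemma sum_ite_two {M : ℕ} (i0 i1 : Fin M) (h : i0 ≠ i1) (a b : ℝ) :
    ∑ i, (if i = i0 then a else if i = i1 then b else 0) = a + b := by
  have key : ∀ i, (if i = i0 then a else if i = i1 then b else 0)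
      = (if i = i0 then a else 0) + (if i = i1 then b else 0) := by
    intro i
    split_ifs with h1 h2 <;> simp_all
  simp [key, Finset.sum_add_distrib, Finset.sum_ite_eq']


set_option maxHeartbeats 2000000 in
/-- for a Modular Linear Top Layer network with `M ≥ 2`, `Q ≥ 1`,
a nonempty dataset and `λ > 1`, there are parametrisations with arbitrarily low
error `E_λ(F, 𝒟)` and simultaneously arbitrarily high ensemble squared loss and
average individual squared loss. -/
theorem mlt_low_error_high_losses {D K Q M N : ℕ} {P : Type*}
    (hM : 2 ≤ M) (hQ : 1 ≤ Q) (hN : 1 ≤ N)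
    (φ : (Fin D → ℝ) → P → (Fin K → ℝ)) (hφ : ∀ x, ∃ ρ, φ x ρ ≠ 0)
    (x : Fin N → Fin D → ℝ) (y : Fin N → Fin Q → ℝ)
    (lam : ℝ) (hlam : 1 < lam) (Q₁ Q₂ : ℝ) (hQ₁ : 0 < Q₁) (hQ₂ : 0 < Q₂) :
    ∃ (W : Fin M → Matrix (Fin Q) (Fin K) ℝ) (ρ : Fin M → P),
      ensError lam (fun i x => (W i) *ᵥ φ x (ρ i)) x y < -Q₁ ∧
      Q₂ < (1 / (N : ℝ)) *
          ∑ n, sqNorm ((1 / (M : ℝ)) • (∑ i, (W i) *ᵥ φ (x n) (ρ i)) - y n) ∧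
      Q₂ < (1 / (N : ℝ)) *
          ∑ n, (1 / (M : ℝ)) * ∑ i, sqNorm ((W i) *ᵥ φ (x n) (ρ i) - y n) := by
  have hM0 : (0:ℝ) < M := by
    have : 0 < M := by omega
    exact_mod_cast this
  have hMne : (M:ℝ) ≠ 0 := ne_of_gt hM0
  have hM1 : (1:ℝ) ≤ M := by exact_mod_cast (by omega : 1 ≤ M)
  have hN0 : (0:ℝ) < N := by
    have : 0 < N := by omega
    exact_mod_cast this
  set n0 : Fin N := ⟨0, hN⟩ with hn0
  obtain ⟨ρ₀, hρ₀⟩ := hφ (x n0)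
  set v0 : Fin K → ℝ := φ (x n0) ρ₀ with hv0def
  set q0 : Fin Q := ⟨0, hQ⟩ with hq0
  set W₀ : Matrix (Fin Q) (Fin K) ℝ := Matrix.of (fun q k => if q = q0 then v0 k else 0)
    with hW₀
  set u : Fin N → Fin Q → ℝ := fun n => W₀ *ᵥ φ (x n) ρ₀ with hu
  -- positivity of sqNorm v0
  have hv0pos : 0 < sqNorm v0 := by
    obtain ⟨k, hk⟩ : ∃ k, v0 k ≠ 0 := by
      by_contra h
      push_neg at h
      exact hρ₀ (funext fun k => h k)
    have h1 : (v0 k)^2 ≤ sqNorm v0 :=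
      Finset.single_le_sum (f := fun k => (v0 k)^2) (fun _ _ => sq_nonneg _) (Finset.mem_univ k)
    have h2 : 0 < (v0 k)^2 := by positivity
    linarith
  have huq : u n0 q0 = sqNorm v0 := by
    simp [hu, hW₀, Matrix.mulVec, dotProduct, ← hv0def, sqNorm, sq]
  have hu0 : 0 < sqNorm (u n0) := by
    have h1 : (u n0 q0)^2 ≤ sqNorm (u n0) :=
      Finset.single_le_sum (f := fun q => (u n0 q)^2) (fun _ _ => sq_nonneg _)
        (Finset.mem_univ q0)
    have h2 : 0 < (u n0 q0)^2 := by rw [huq]; positivity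
    linarith
  -- diversity parameter
  set ε : ℝ := Real.sqrt ((lam - 1)/lam) with hεdef
  have hεpos : 0 < ε :=
    Real.sqrt_pos.mpr (div_pos (by linarith) (by linarith))
  have hεsq : ε^2 = (lam - 1)/lam := Real.sq_sqrt (le_of_lt (div_pos (by linarith) (by linarith)))
  set κ : ℝ := (1 + ε)^2 + 1 with hκdef
  have hκ2 : 2 ≤ κ := by nlinarith
  have hκpos : 0 < κ := by linarith
  set α : ℝ := ((1 - lam)*κ + lam*ε^2/M)/M with hαdef
  have hα : α < 0 := by
    have hle : lam*ε^2 = lam - 1 := by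
      rw [hεsq]; field_simp
    have h3 : (lam - 1)/M ≤ lam - 1 := div_le_self (by linarith) hM1
    have h4 : (1 - lam)*κ ≤ (1 - lam)*2 := by nlinarith
    have hnum : (1 - lam)*κ + lam*ε^2/M < 0 := by
      rw [mul_div_assoc] at *
      rw [show lam*(ε^2/M) = (lam*ε^2)/M by ring, hle]
      nlinarith [h3, h4, hlam]
    exact div_neg_of_neg_of_pos hnum hM0
  -- averages
  set SU : ℝ := (1/(N:ℝ)) * ∑ n, sqNorm (u n) with hSUdef
  set SI : ℝ := (1/(N:ℝ)) * ∑ n, ∑ k, u n k * y n k with hSIdef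
  set SY : ℝ := (1/(N:ℝ)) * ∑ n, sqNorm (y n) with hSYdef
  have hSU : 0 < SU := by
    rw [hSUdef]
    refine mul_pos (by positivity) ?_
    have h1 : sqNorm (u n0) ≤ ∑ n, sqNorm (u n) :=
      Finset.single_le_sum (f := fun n => sqNorm (u n)) (fun n _ => sqNorm_nonneg _)
        (Finset.mem_univ n0)
    linarith
  -- choose t via limits
  have hbot : Tendsto (fun t : ℝ => t * ((α*SU)*t + ((-2*ε/M)*SI)) + SY) atTop atBot := by
    refine tendsto_atBot_add_const_right _ SY ?_
    refine Filter.Tendsto.atTop_mul_atBot₀ tendsto_id ?_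
    refine tendsto_atBot_add_const_right _ _ ?_
    exact Tendsto.const_mul_atTop_of_neg (mul_neg_of_neg_of_pos hα hSU) tendsto_id
  have htop2 : Tendsto (fun t : ℝ => t * (((ε/M)^2*SU)*t + ((-2*ε/M)*SI)) + SY) atTop atTop := by
    refine tendsto_atTop_add_const_right _ SY ?_
    refine Filter.Tendsto.atTop_mul_atTop₀ tendsto_id ?_
    refine tendsto_atTop_add_const_right _ _ ?_
    exact Tendsto.const_mul_atTop (mul_pos (pow_pos (div_pos hεpos hM0) 2) hSU) tendsto_id
  have htop3 : Tendsto (fun t : ℝ => t * (((κ/M)*SU)*t + ((-2*ε/M)*SI)) + SY) atTop atTop := by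
    refine tendsto_atTop_add_const_right _ SY ?_
    refine Filter.Tendsto.atTop_mul_atTop₀ tendsto_id ?_
    refine tendsto_atTop_add_const_right _ _ ?_
    exact Tendsto.const_mul_atTop (mul_pos (div_pos hκpos hM0) hSU) tendsto_id
  obtain ⟨t, ht1, ht2, ht3⟩ :=
    ((hbot.eventually (eventually_lt_atBot (-Q₁))).and
      ((htop2.eventually (eventually_gt_atTop Q₂)).and
        (htop3.eventually (eventually_gt_atTop Q₂)))).exists
  -- modules
  set i0 : Fin M := ⟨0, by omega⟩ with hi0
  set i1 : Fin M := ⟨1, by omega⟩ with hi1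
  have hi01 : i0 ≠ i1 := by
    intro h
    rw [hi0, hi1, Fin.mk.injEq] at h
    omega
  set a : ℝ := t*(1+ε) with ha
  set b : ℝ := -t with hb
  set c : Fin M → ℝ := fun i => if i = i0 then a else if i = i1 then b else 0 with hc
  have hS1 : ∑ i, c i = t*ε := by
    simp only [hc]
    rw [sum_ite_two i0 i1 hi01, ha, hb]; ring
  have hS2 : ∑ i, (c i)^2 = t^2*κ := by
    have key : ∀ i, (c i)^2 = (if i = i0 then a^2 else if i = i1 then b^2 else 0) := by
      intro i
      simp only [hc]
      split_ifs <;> ring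
    rw [Finset.sum_congr rfl (fun i _ => key i), sum_ite_two i0 i1 hi01, ha, hb, hκdef]
    ring
  have hF : ∀ (i : Fin M) (n : Fin N), (c i • W₀) *ᵥ φ (x n) ρ₀ = c i • u n := by
    intro i n
    rw [hu]
    exact Matrix.smul_mulVec _ _ _
  have hmean : ∀ n : Fin N, (1/(M:ℝ)) • ∑ j, c j • u n = ((t*ε)/M) • u n := by
    intro n
    rw [← Finset.sum_smul, hS1, smul_smul]
    congr 1
    ring
  have hsum1 : ∀ n : Fin N, ∑ i, sqNorm (c i • u n - y n)
      = (t^2*κ) * sqNorm (u n) + (-2*(t*ε))*(∑ k, u n k * y n k) + (M:ℝ) * sqNorm (y n) := by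
    intro n
    calc ∑ i, sqNorm (c i • u n - y n)
        = ∑ i, ((c i)^2 * sqNorm (u n) + (c i) * (-2*(∑ k, u n k * y n k)) + sqNorm (y n)) :=
          Finset.sum_congr rfl fun i _ => by rw [sqNorm_smul_sub]; ring
      _ = (∑ i, (c i)^2) * sqNorm (u n) + (∑ i, c i) * (-2*(∑ k, u n k * y n k))
            + (M:ℝ) * sqNorm (y n) := by
          rw [Finset.sum_add_distrib, Finset.sum_add_distrib, ← Finset.sum_mul,
            ← Finset.sum_mul, Finset.sum_const, Finset.card_univ, Fintype.card_fin,
            nsmul_eq_mul]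
      _ = _ := by rw [hS1, hS2]; ring
  have hsum2 : ∀ n : Fin N, ∑ i, sqNorm (c i • u n - ((t*ε)/M) • u n)
      = (t^2*κ - 2*((t*ε)/M)*(t*ε) + (M:ℝ)*((t*ε)/M)^2) * sqNorm (u n) := by
    intro n
    calc ∑ i, sqNorm (c i • u n - ((t*ε)/M) • u n)
        = ∑ i, (((c i)^2 + (c i)*(-2*((t*ε)/M)) + ((t*ε)/M)^2) * sqNorm (u n)) :=
          Finset.sum_congr rfl fun i _ => by
            rw [show c i • u n - ((t*ε)/M) • u n = (c i - (t*ε)/M) • u n from (sub_smul _ _ _).symm,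
              sqNorm_smul]
            ring
      _ = (∑ i, ((c i)^2 + (c i)*(-2*((t*ε)/M)) + ((t*ε)/M)^2)) * sqNorm (u n) :=
          (Finset.sum_mul _ _ _).symm
      _ = ((t^2*κ) + (t*ε)*(-2*((t*ε)/M)) + (M:ℝ)*((t*ε)/M)^2) * sqNorm (u n) := by
          rw [Finset.sum_add_distrib, Finset.sum_add_distrib, ← Finset.sum_mul,
            Finset.sum_const, Finset.card_univ, Fintype.card_fin, nsmul_eq_mul, hS1, hS2]
      _ = _ := by ring
  refine ⟨fun i => c i • W₀, fun _ => ρ₀, ?_, ?_, ?_⟩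
  · -- ensError < -Q₁
    show ensError lam (fun i z => (c i • W₀) *ᵥ φ z ρ₀) x y < -Q₁
    have key : ensError lam (fun i z => (c i • W₀) *ᵥ φ z ρ₀) x y
        = t * ((α*SU)*t + ((-2*ε/M)*SI)) + SY := by
      rw [ensError]
      simp only [hF, hmean, hsum1, hsum2]
      calc (1/(N:ℝ)) * ∑ n, ((1/(M:ℝ)) * ((t^2*κ) * sqNorm (u n)
              + (-2*(t*ε))*(∑ k, u n k * y n k) + (M:ℝ) * sqNorm (y n))
            - lam * ((1/(M:ℝ)) * ((t^2*κ - 2*((t*ε)/M)*(t*ε) + (M:ℝ)*((t*ε)/M)^2) * sqNorm (u n))))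
          = (1/(N:ℝ)) * ∑ n, ((t^2*α) * sqNorm (u n)
              + ((-2*ε/M)*t) * (∑ k, u n k * y n k) + sqNorm (y n)) := by
            refine congrArg _ (Finset.sum_congr rfl fun n _ => ?_)
            rw [hαdef]
            field_simp
            ring
        _ = t * ((α*SU)*t + ((-2*ε/M)*SI)) + SY := by
            rw [Finset.sum_add_distrib, Finset.sum_add_distrib, ← Finset.mul_sum,
              ← Finset.mul_sum, hSUdef, hSIdef, hSYdef]
            ring
    rw [key]
    exact ht1
  · -- ensemble loss > Q₂
    show Q₂ < (1/(N:ℝ)) * ∑ n, sqNorm ((1/(M:ℝ)) • (∑ i, (c i • W₀) *ᵥ φ (x n) ρ₀) - y n)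
    have key : (1/(N:ℝ)) * ∑ n, sqNorm ((1/(M:ℝ)) • (∑ i, (c i • W₀) *ᵥ φ (x n) ρ₀) - y n)
        = t * (((ε/M)^2*SU)*t + ((-2*ε/M)*SI)) + SY := by
      simp only [hF, hmean, sqNorm_smul_sub]
      calc (1/(N:ℝ)) * ∑ n, (((t*ε)/M)^2 * sqNorm (u n)
              - 2*((t*ε)/M)*(∑ k, u n k * y n k) + sqNorm (y n))
          = (1/(N:ℝ)) * ∑ n, (((t*ε)/M)^2 * sqNorm (u n)
              + ((-2*ε/M)*t) * (∑ k, u n k * y n k) + sqNorm (y n)) := by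
            refine congrArg _ (Finset.sum_congr rfl fun n _ => ?_)
            ring
        _ = t * (((ε/M)^2*SU)*t + ((-2*ε/M)*SI)) + SY := by
            rw [Finset.sum_add_distrib, Finset.sum_add_distrib, ← Finset.mul_sum,
              ← Finset.mul_sum, hSUdef, hSIdef, hSYdef]
            ring
    rw [key]
    exact ht2
  · -- individual loss > Q₂
    show Q₂ < (1/(N:ℝ)) * ∑ n, (1/(M:ℝ)) * ∑ i, sqNorm ((c i • W₀) *ᵥ φ (x n) ρ₀ - y n)
    have key : (1/(N:ℝ)) * ∑ n, (1/(M:ℝ)) * ∑ i, sqNorm ((c i • W₀) *ᵥ φ (x n) ρ₀ - y n)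
        = t * (((κ/M)*SU)*t + ((-2*ε/M)*SI)) + SY := by
      simp only [hF, hsum1]
      calc (1/(N:ℝ)) * ∑ n, ((1/(M:ℝ)) * ((t^2*κ) * sqNorm (u n)
              + (-2*(t*ε))*(∑ k, u n k * y n k) + (M:ℝ) * sqNorm (y n)))
          = (1/(N:ℝ)) * ∑ n, ((t^2*(κ/M)) * sqNorm (u n)
              + ((-2*ε/M)*t) * (∑ k, u n k * y n k) + sqNorm (y n)) := by
            refine congrArg _ (Finset.sum_congr rfl fun n _ => ?_)
            field_simp
        _ = t * (((κ/M)*SU)*t + ((-2*ε/M)*SI)) + SY := by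
            rw [Finset.sum_add_distrib, Finset.sum_add_distrib, ← Finset.mul_sum,
              ← Finset.mul_sum, hSUdef, hSIdef, hSYdef]
            ring
    rw [key]
    exact ht3
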